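/- Fix e ∈ [0,1) and suppose β₁ < β₂ in (0,1) are such that, for β ∈ [0,1], det(γ_{β,e}(2π) + I₂) = 0 holds exactly when β ∈ {β₁, β₂}. Then for every β with β₁ < β < β₂, the monodromy matrix γ_{β,e}(2π) has a real eigenvalue μ with μ < −1 (equivalently, tr γ_{β,e}(2π) < −2); in particular sup_{n∈ℕ} ‖γ_{β,e}(2π)ⁿ‖ = ∞, so γ_{β,e}(2π) is linearly unstable. -/

import Mathlib

/-!
The monodromy matrix of `γ' = J B γ` is that of Hill's equation `x'' + k x = 0` with
`k = 1 - β/(1 + e cos t)`, which decreases in `β`. Follow a solution through the direction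
`(cos φ, sin φ)` in polar coordinates: its angle satisfies `θ' = cos² θ + k sin² θ`, so by Sturm
comparison the angle gained over `[0, 2π]` decreases as `β` grows. A `-1`-eigenvector gains an
odd multiple of `π`, and the bounds `0 ≤ θ(t) ≤ φ + t` (for `φ ∈ [0, π)`, `k ≤ 1`) force exactly
`π`. Hence for `β₁ < β < β₂` the gain is `≤ π` in one direction and `≥ π` in another, and by
continuity some direction gains exactly `π`: it is an eigenvector with eigenvalue `μ < 0`, and
`μ ≠ -1` as `β` is not degenerate. Since `det = 1`, the trace is `μ + 1/μ < -2`, so there is an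
eigenvalue below `-1` and the powers blow up.
-/

open Real Matrix

attribute [local instance] Matrix.normedAddCommGroup

noncomputable section

/-- The standard symplectic matrix `J = [[0,-1],[1,0]]`. -/
def Jmat : Matrix (Fin 2) (Fin 2) ℝ := !![0, -1; 1, 0]

/-- The coefficient matrix `B_{β,e}(t) = diag(1, 1 - β/(1 + e cos t))`. -/
def Bmat (β e t : ℝ) : Matrix (Fin 2) (Fin 2) ℝ :=
  !![1, 0; 0, 1 - β / (1 + e * Real.cos t)]

/-- `γ` is the fundamental solution of `γ' = J B_{β,e} γ`, `γ(0) = I₂`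
(derivative taken entrywise). -/
def IsFundSol (β e : ℝ) (γ : ℝ → Matrix (Fin 2) (Fin 2) ℝ) : Prop :=
  γ 0 = 1 ∧ ∀ (t : ℝ) (i j : Fin 2),
    HasDerivAt (fun s => γ s i j) ((Jmat * Bmat β e t * γ t) i j) t

/-- The trace-formula function `f(β,-1)`. -/
def fTrace (β : ℝ) : ℝ :=
  β ^ 2 / (2 * (1 - β)) *
    ∫ s in (π / 2)..(3 * π / 2), ∫ t in (π / 2)..(3 * π / 2),
      Real.cos s * Real.cos t *
        (Real.cos (2 * π * Real.sqrt (1 - β) * (s - t)) ^ 2 /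
            Real.cos (π * Real.sqrt (1 - β)) ^ 2 -
          Real.cos (4 * π * Real.sqrt (1 - β) * (s - t + 1 / 4)) /
            Real.cos (π * Real.sqrt (1 - β)))

lemma abs_sin_sq_sub_sin_sq_le (a b : ℝ) : |sin a ^ 2 - sin b ^ 2| ≤ |a - b| := by
  have h : sin a ^ 2 - sin b ^ 2 = sin (a + b) * sin (a - b) := by
    rw [sin_add, sin_sub]; nlinarith [sin_sq_add_cos_sq a, sin_sq_add_cos_sq b]
  rw [h, abs_mul]
  calc |sin (a + b)| * |sin (a - b)| ≤ 1 * |a - b| :=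
        mul_le_mul (abs_sin_le_one _) abs_sin_le_abs (abs_nonneg _) zero_le_one
    _ = |a - b| := one_mul _

theorem pruefer_comparison {ka kb θa θb : ℝ → ℝ} {L T : ℝ}
    (ha : ∀ t, HasDerivAt θa (cos (θa t) ^ 2 + ka t * sin (θa t) ^ 2) t)
    (hb : ∀ t, HasDerivAt θb (cos (θb t) ^ 2 + kb t * sin (θb t) ^ 2) t)
    (hk : ∀ t ∈ Set.Icc 0 T, kb t ≤ ka t) (hL : ∀ t ∈ Set.Icc 0 T, |ka t - 1| ≤ L)
    (h0 : θb 0 ≤ θa 0) (hT : 0 ≤ T) : θb T ≤ θa T := by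
  -- `θa + ε e^{(L+1)t}` is a strict upper barrier for `θb`, since the right-hand side is
  -- `L`-Lipschitz in `θ`; then let `ε → 0`.
  have hbarrier : ∀ ε > 0, θb T ≤ θa T + ε * exp ((L + 1) * T) := by
    intro ε hε
    have hB : ∀ t, HasDerivAt (fun t => θa t + ε * exp ((L + 1) * t))
        (cos (θa t) ^ 2 + ka t * sin (θa t) ^ 2 + ε * (exp ((L + 1) * t) * (L + 1))) t := by
      intro t
      exact (ha t).add (((hasDerivAt_id t).const_mul (L + 1)).exp.const_mul ε |>.congr_deriv
        (by simp))
    refine image_le_of_deriv_right_lt_deriv_boundary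
      (fun t _ => (hb t).continuousAt.continuousWithinAt) (fun t _ => (hb t).hasDerivWithinAt)
      (by simp; linarith [hε]) hB ?_ ⟨hT, le_rfl⟩
    intro t ht heq
    have hLt := hL t (Set.Ico_subset_Icc_self ht)
    have hkt := hk t (Set.Ico_subset_Icc_self ht)
    have hdiff : θb t - θa t = ε * exp ((L + 1) * t) := by rw [heq]; ring
    have hlip : (ka t - 1) * (sin (θb t) ^ 2 - sin (θa t) ^ 2) ≤ L * (ε * exp ((L + 1) * t)) :=
      calc _ ≤ |ka t - 1| * |sin (θb t) ^ 2 - sin (θa t) ^ 2| := by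
            rw [← abs_mul]; exact le_abs_self _
        _ ≤ L * |θb t - θa t| :=
          mul_le_mul hLt (abs_sin_sq_sub_sin_sq_le _ _) (abs_nonneg _) ((abs_nonneg _).trans hLt)
        _ = L * (ε * exp ((L + 1) * t)) := by rw [hdiff, abs_of_pos (by positivity)]
    have hpos : 0 < ε * exp ((L + 1) * t) := by positivity
    nlinarith [sin_sq_add_cos_sq (θa t), sin_sq_add_cos_sq (θb t), sq_nonneg (sin (θb t))]
  refine le_of_forall_pos_le_add fun ε hε => ?_
  simpa [mul_assoc, ← exp_add] using hbarrier (ε * exp (-((L + 1) * T))) (by positivity)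

lemma nonneg_of_hasDerivAt_pruefer {k θ : ℝ → ℝ} {T : ℝ}
    (hθ : ∀ t, HasDerivAt θ (cos (θ t) ^ 2 + k t * sin (θ t) ^ 2) t) (h0 : 0 ≤ θ 0)
    (hT : 0 ≤ T) : 0 ≤ θ T :=
  image_le_of_deriv_right_lt_deriv_boundary (f' := 0)
    (fun _ _ => continuousWithinAt_const) (fun _ _ => hasDerivWithinAt_const _ _ _) h0 hθ
    (fun t _ ht => by simp [← ht]) ⟨hT, le_rfl⟩

lemma le_add_of_hasDerivAt_pruefer {k θ : ℝ → ℝ} {T : ℝ}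
    (hθ : ∀ t, HasDerivAt θ (cos (θ t) ^ 2 + k t * sin (θ t) ^ 2) t) (hk : ∀ t, k t ≤ 1)
    (hT : 0 ≤ T) : θ T ≤ θ 0 + T := by
  have hspeed : ∀ t, deriv θ t ≤ 1 := fun t => by
    rw [(hθ t).deriv]
    nlinarith [hk t, sin_sq_add_cos_sq (θ t), sq_nonneg (sin (θ t))]
  have := image_sub_le_mul_sub_of_deriv_le (fun t => (hθ t).differentiableAt) hspeed hT
  linarith

theorem eq_mul_cexp_integral_div {z z' : ℝ → ℂ} (hz : ∀ t, HasDerivAt z (z' t) t)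
    (hz' : Continuous z') (hne : ∀ t, z t ≠ 0) (t : ℝ) :
    z t = z 0 * Complex.exp (∫ s in (0 : ℝ)..t, z' s / z s) := by
  set F : ℝ → ℂ := fun t => ∫ s in (0 : ℝ)..t, z' s / z s
  have hcont : Continuous fun s => z' s / z s :=
    hz'.div (continuous_iff_continuousAt.2 fun s => (hz s).continuousAt) hne
  have hF : ∀ t, HasDerivAt F (z' t / z t) t := fun t =>
    intervalIntegral.integral_hasDerivAt_right (hcont.intervalIntegrable 0 t)
      hcont.aestronglyMeasurable.stronglyMeasurableAtFilter hcont.continuousAt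
  have hu : ∀ s, HasDerivAt (fun s => z s * Complex.exp (-F s)) 0 s := by
    intro s
    refine ((hz s).mul (hF s).neg.cexp).congr_deriv ?_
    field_simp [hne s]
    ring
  have hconst := is_const_of_deriv_eq_zero (fun s => (hu s).differentiableAt)
    (fun s => (hu s).deriv) t 0
  simp only [F, intervalIntegral.integral_same, neg_zero, Complex.exp_zero, mul_one] at hconst
  rw [← hconst, mul_assoc, ← Complex.exp_add, neg_add_cancel, Complex.exp_zero, mul_one]

def vecToComplex (v : Fin 2 → ℝ) : ℂ := v 0 + v 1 * Complex.I

@[simp] lemma vecToComplex_re (v : Fin 2 → ℝ) : (vecToComplex v).re = v 0 := by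
  simp [vecToComplex]

@[simp] lemma vecToComplex_im (v : Fin 2 → ℝ) : (vecToComplex v).im = v 1 := by
  simp [vecToComplex]

lemma vecToComplex_injective : Function.Injective vecToComplex := by
  intro v w h
  ext i
  fin_cases i
  · simpa using congrArg Complex.re h
  · simpa using congrArg Complex.im h

lemma vecToComplex_ne_zero {v : Fin 2 → ℝ} : vecToComplex v ≠ 0 ↔ v ≠ 0 :=
  vecToComplex_injective.ne_iff' (by simp [vecToComplex])

lemma vecToComplex_smul (c : ℝ) (v : Fin 2 → ℝ) :
    vecToComplex (c • v) = c * vecToComplex v := by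
  apply Complex.ext <;> simp

lemma cos_sin_ne_zero (φ : ℝ) : ![cos φ, sin φ] ≠ 0 := by
  intro h
  have h0 : cos φ = 0 := by simpa using congrFun h 0
  have h1 : sin φ = 0 := by simpa using congrFun h 1
  simpa [h0, h1] using sin_sq_add_cos_sq φ

lemma exists_mem_Ico_cos_sin_eq_smul {v : Fin 2 → ℝ} (hv : v ≠ 0) :
    ∃ φ ∈ Set.Ico 0 π, ∃ c : ℝ, ![cos φ, sin φ] = c • v := by
  have hz : vecToComplex v ≠ 0 := vecToComplex_ne_zero.2 hv
  have hcos := Complex.cos_arg hz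
  have hsin := Complex.sin_arg (vecToComplex v)
  obtain ⟨φ, hφ, n, ha⟩ : ∃ φ ∈ Set.Ico 0 π, ∃ n : ℤ, (vecToComplex v).arg = φ + n * π :=
    ⟨_, toIcoMod_mem_Ico' pi_pos _, toIcoDiv pi_pos 0 _, by
      rw [← self_sub_toIcoDiv_zsmul, zsmul_eq_mul]; ring⟩
  rw [ha, cos_add_int_mul_pi, vecToComplex_re] at hcos
  rw [ha, sin_add_int_mul_pi, vecToComplex_im] at hsin
  have hsq : ((-1 : ℝ) ^ n) * (-1) ^ n = 1 := by
    rw [← mul_zpow]; norm_num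
  refine ⟨φ, hφ, (-1) ^ n / ‖vecToComplex v‖, ?_⟩
  ext i
  fin_cases i
  · show cos φ = (-1) ^ n / ‖vecToComplex v‖ * v 0
    rw [div_mul_eq_mul_div, mul_div_assoc, ← hcos, ← mul_assoc, hsq, one_mul]
  · show sin φ = (-1) ^ n / ‖vecToComplex v‖ * v 1
    rw [div_mul_eq_mul_div, mul_div_assoc, ← hsin, ← mul_assoc, hsq, one_mul]

def hillMatrix (k : ℝ) : Matrix (Fin 2) (Fin 2) ℝ := !![0, -k; 1, 0]

/-- Fundamental solution of `x₀' = -k x₁, x₁' = x₀`, i.e. of Hill's equation `x₁'' + k x₁ = 0`. -/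
def IsHillFundSol (k : ℝ → ℝ) (γ : ℝ → Matrix (Fin 2) (Fin 2) ℝ) : Prop :=
  γ 0 = 1 ∧ ∀ (t : ℝ) (i j : Fin 2),
    HasDerivAt (fun s => γ s i j) ((hillMatrix (k t) * γ t) i j) t

@[simp] lemma hillMatrix_mulVec_zero (k : ℝ) (v : Fin 2 → ℝ) :
    (hillMatrix k *ᵥ v) 0 = -(k * v 1) := by
  simp [hillMatrix, mulVec, dotProduct, Fin.sum_univ_two]

@[simp] lemma hillMatrix_mulVec_one (k : ℝ) (v : Fin 2 → ℝ) : (hillMatrix k *ᵥ v) 1 = v 0 := by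
  simp [hillMatrix, mulVec, dotProduct, Fin.sum_univ_two]

namespace IsHillFundSol

variable {k : ℝ → ℝ} {γ : ℝ → Matrix (Fin 2) (Fin 2) ℝ}

lemma continuous_apply (h : IsHillFundSol k γ) (i j : Fin 2) : Continuous fun s => γ s i j :=
  continuous_iff_continuousAt.2 fun t => (h.2 t i j).continuousAt

lemma continuous (h : IsHillFundSol k γ) : Continuous γ :=
  continuous_pi fun i => continuous_pi fun j => h.continuous_apply i j

lemma hasDerivAt_mulVec (h : IsHillFundSol k γ) (u : Fin 2 → ℝ) (t : ℝ) (i : Fin 2) :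
    HasDerivAt (fun s => (γ s *ᵥ u) i) ((hillMatrix (k t) *ᵥ (γ t *ᵥ u)) i) t := by
  rw [mulVec_mulVec]
  simp only [mulVec, dotProduct]
  exact HasDerivAt.fun_sum fun j _ => (h.2 t i j).mul_const (u j)

lemma det_eq_one (h : IsHillFundSol k γ) (t : ℝ) : (γ t).det = 1 := by
  have hd (i j : Fin 2) (s : ℝ) := h.2 s i j
  simp only [hillMatrix, Matrix.mul_apply, Fin.sum_univ_two] at hd
  have hD : ∀ s, HasDerivAt (fun s => (γ s).det) 0 s := by
    intro s
    simp only [det_fin_two]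
    refine (((hd 0 0 s).mul (hd 1 1 s)).sub ((hd 0 1 s).mul (hd 1 0 s))).congr_deriv ?_
    simp; ring
  rw [is_const_of_deriv_eq_zero (fun s => (hD s).differentiableAt) (fun s => (hD s).deriv) t 0,
    h.1, det_one]

lemma mulVec_ne_zero (h : IsHillFundSol k γ) {u : Fin 2 → ℝ} (hu : u ≠ 0) (t : ℝ) :
    γ t *ᵥ u ≠ 0 := fun h0 =>
  one_ne_zero (h.det_eq_one t ▸ Matrix.exists_mulVec_eq_zero_iff.1 ⟨u, hu, h0⟩)

end IsHillFundSol

def hillOrbit (γ : ℝ → Matrix (Fin 2) (Fin 2) ℝ) (φ t : ℝ) : ℂ :=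
  vecToComplex (γ t *ᵥ ![cos φ, sin φ])

def hillOrbitDeriv (k : ℝ → ℝ) (γ : ℝ → Matrix (Fin 2) (Fin 2) ℝ) (φ t : ℝ) : ℂ :=
  vecToComplex (hillMatrix (k t) *ᵥ (γ t *ᵥ ![cos φ, sin φ]))

def hillLog (k : ℝ → ℝ) (γ : ℝ → Matrix (Fin 2) (Fin 2) ℝ) (φ t : ℝ) : ℂ :=
  ∫ s in (0 : ℝ)..t, hillOrbitDeriv k γ φ s / hillOrbit γ φ s

/-- A continuous branch of `arg (hillOrbit γ φ t)` starting from `φ`. -/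
def prueferAngle (k : ℝ → ℝ) (γ : ℝ → Matrix (Fin 2) (Fin 2) ℝ) (φ t : ℝ) : ℝ :=
  φ + (hillLog k γ φ t).im

@[simp] lemma prueferAngle_zero (k : ℝ → ℝ) (γ : ℝ → Matrix (Fin 2) (Fin 2) ℝ) (φ : ℝ) :
    prueferAngle k γ φ 0 = φ := by
  simp [prueferAngle, hillLog]

lemma im_vecToComplex_hillMatrix_mulVec_div (k θ : ℝ) :
    (vecToComplex (hillMatrix k *ᵥ ![cos θ, sin θ]) / vecToComplex ![cos θ, sin θ]).im =
      cos θ ^ 2 + k * sin θ ^ 2 := by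
  rw [Complex.div_im, Complex.normSq_apply]
  simp only [hillMatrix_mulVec_zero, hillMatrix_mulVec_one, vecToComplex_re, vecToComplex_im,
    Matrix.cons_val_zero, Matrix.cons_val_one]
  rw [← sq, ← sq, cos_sq_add_sin_sq]
  ring

namespace IsHillFundSol

variable {k : ℝ → ℝ} {γ : ℝ → Matrix (Fin 2) (Fin 2) ℝ}

lemma hasDerivAt_hillOrbit (h : IsHillFundSol k γ) (φ t : ℝ) :
    HasDerivAt (hillOrbit γ φ) (hillOrbitDeriv k γ φ t) t :=
  ((h.hasDerivAt_mulVec _ t 0).ofReal_comp).add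
    (((h.hasDerivAt_mulVec _ t 1).ofReal_comp).mul_const Complex.I)

lemma hillOrbit_ne_zero (h : IsHillFundSol k γ) (φ t : ℝ) : hillOrbit γ φ t ≠ 0 :=
  vecToComplex_ne_zero.2 (h.mulVec_ne_zero (cos_sin_ne_zero φ) t)

lemma hillOrbit_zero (h : IsHillFundSol k γ) (φ : ℝ) :
    hillOrbit γ φ 0 = Complex.exp (φ * Complex.I) := by
  apply Complex.ext <;> simp [hillOrbit, h.1, Complex.exp_ofReal_mul_I_re,
    Complex.exp_ofReal_mul_I_im]

lemma continuous_hillOrbit (h : IsHillFundSol k γ) :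
    Continuous fun p : ℝ × ℝ => hillOrbit γ p.1 p.2 := by
  have hγ := h.continuous
  simp only [hillOrbit, vecToComplex, mulVec, dotProduct, Fin.sum_univ_two]
  fun_prop

variable (hk : Continuous k)
include hk

lemma continuous_hillOrbitDeriv (h : IsHillFundSol k γ) :
    Continuous fun p : ℝ × ℝ => hillOrbitDeriv k γ p.1 p.2 := by
  have hγ := h.continuous
  simp only [hillOrbitDeriv, vecToComplex, hillMatrix_mulVec_zero, hillMatrix_mulVec_one]
  simp only [mulVec, dotProduct, Fin.sum_univ_two]
  fun_prop

lemma hillOrbit_eq_cexp (h : IsHillFundSol k γ) (φ t : ℝ) :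
    hillOrbit γ φ t =
      Complex.exp ((hillLog k γ φ t).re + prueferAngle k γ φ t * Complex.I) := by
  have hz' : Continuous (hillOrbitDeriv k γ φ) :=
    (h.continuous_hillOrbitDeriv hk).uncurry_left φ
  rw [eq_mul_cexp_integral_div (h.hasDerivAt_hillOrbit φ) hz' (h.hillOrbit_ne_zero φ) t,
    h.hillOrbit_zero, ← Complex.exp_add]
  congr 1
  apply Complex.ext <;> simp [hillLog, prueferAngle]

lemma mulVec_eq_exp_smul (h : IsHillFundSol k γ) (φ t : ℝ) :
    γ t *ᵥ ![cos φ, sin φ] =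
      exp (hillLog k γ φ t).re • ![cos (prueferAngle k γ φ t), sin (prueferAngle k γ φ t)] := by
  apply vecToComplex_injective
  rw [vecToComplex_smul, ← hillOrbit, h.hillOrbit_eq_cexp hk, Complex.exp_add,
    Complex.exp_mul_I]
  apply Complex.ext <;> simp [← Complex.ofReal_exp, ← Complex.ofReal_cos, ← Complex.ofReal_sin]

lemma hasDerivAt_prueferAngle (h : IsHillFundSol k γ) (φ t : ℝ) :
    HasDerivAt (prueferAngle k γ φ)
      (cos (prueferAngle k γ φ t) ^ 2 + k t * sin (prueferAngle k γ φ t) ^ 2) t := by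
  have hcont : Continuous fun s => hillOrbitDeriv k γ φ s / hillOrbit γ φ s :=
    ((h.continuous_hillOrbitDeriv hk).uncurry_left φ).div
      (h.continuous_hillOrbit.uncurry_left φ) (h.hillOrbit_ne_zero φ)
  have hlog : HasDerivAt (hillLog k γ φ) (hillOrbitDeriv k γ φ t / hillOrbit γ φ t) t :=
    intervalIntegral.integral_hasDerivAt_right (hcont.intervalIntegrable 0 t)
      hcont.aestronglyMeasurable.stronglyMeasurableAtFilter hcont.continuousAt
  have him : HasDerivAt (fun s => (hillLog k γ φ s).im)
      (hillOrbitDeriv k γ φ t / hillOrbit γ φ t).im t :=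
    Complex.imCLM.hasFDerivAt.comp_hasDerivAt t hlog
  refine (him.const_add φ).congr_deriv ?_
  rw [hillOrbitDeriv, hillOrbit, h.mulVec_eq_exp_smul hk, mulVec_smul, vecToComplex_smul,
    vecToComplex_smul, mul_div_mul_left _ _ (Complex.ofReal_ne_zero.2 (exp_pos _).ne'),
    im_vecToComplex_hillMatrix_mulVec_div]

lemma continuous_prueferAngle (h : IsHillFundSol k γ) (T : ℝ) :
    Continuous fun φ => prueferAngle k γ φ T := by
  have hcont : Continuous fun p : ℝ × ℝ => hillOrbitDeriv k γ p.1 p.2 / hillOrbit γ p.1 p.2 :=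
    (h.continuous_hillOrbitDeriv hk).div h.continuous_hillOrbit
      fun p => h.hillOrbit_ne_zero p.1 p.2
  exact continuous_id.add (Complex.continuous_im.comp
    (intervalIntegral.continuous_parametric_intervalIntegral_of_continuous' hcont 0 T))

variable {T : ℝ}

lemma exists_prueferAngle_eq_add_pi (h : IsHillFundSol k γ)
    (hk1 : ∀ t, k t ≤ 1) (hT₀ : 0 ≤ T) (hT : T ≤ 2 * π) (hdeg : (γ T + 1).det = 0) :
    ∃ φ, prueferAngle k γ φ T = φ + π := by
  obtain ⟨v, hv, hv0⟩ := Matrix.exists_mulVec_eq_zero_iff.2 hdeg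
  obtain ⟨φ, hφ, c, hc⟩ := exists_mem_Ico_cos_sin_eq_smul hv
  have hflip : γ T *ᵥ ![cos φ, sin φ] = -![cos φ, sin φ] := by
    rw [add_mulVec, one_mulVec] at hv0
    rw [hc, mulVec_smul, eq_neg_of_add_eq_zero_left hv0, smul_neg]
  -- the orbit comes back reversed, so its argument has advanced by an odd multiple of `π`
  obtain ⟨n, hn⟩ : ∃ n : ℤ, prueferAngle k γ φ T = φ + π + n * (2 * π) := by
    have hz : hillOrbit γ φ T = Complex.exp ((φ + π : ℝ) * Complex.I) := by
      rw [hillOrbit, hflip]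
      apply Complex.ext
      · rw [Complex.exp_ofReal_mul_I_re, cos_add_pi]; simp
      · rw [Complex.exp_ofReal_mul_I_im, sin_add_pi]; simp
    rw [h.hillOrbit_eq_cexp hk, Complex.exp_eq_exp_iff_exists_int] at hz
    obtain ⟨n, hn⟩ := hz
    exact ⟨n, by simpa using congrArg Complex.im hn⟩
  have hθ := h.hasDerivAt_prueferAngle hk φ
  have hlow := nonneg_of_hasDerivAt_pruefer hθ (by simpa using hφ.1) hT₀
  have hup := le_add_of_hasDerivAt_pruefer hθ hk1 hT₀
  rw [prueferAngle_zero] at hup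
  obtain rfl : n = 0 := by
    have h1 : (-1 : ℝ) < n := by nlinarith [hφ.2, pi_pos]
    have h2 : (n : ℝ) < 1 := by nlinarith [pi_pos]
    have : (-1 : ℤ) < n := by exact_mod_cast h1
    have : n < 1 := by exact_mod_cast h2
    omega
  exact ⟨φ, by simpa using hn⟩

lemma exists_neg_eigenvalue_of_prueferAngle_eq_add_pi (h : IsHillFundSol k γ) {φ : ℝ}
    (hφ : prueferAngle k γ φ T = φ + π) :
    ∃ μ : ℝ, μ < 0 ∧ (γ T - μ • 1).det = 0 := by
  refine ⟨-exp (hillLog k γ φ T).re, neg_neg_of_pos (exp_pos _),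
    Matrix.exists_mulVec_eq_zero_iff.1 ⟨_, cos_sin_ne_zero φ, ?_⟩⟩
  rw [sub_mulVec, smul_mulVec, one_mulVec, h.mulVec_eq_exp_smul hk, hφ, cos_add_pi, sin_add_pi]
  ext i
  fin_cases i <;> simp

lemma prueferAngle_le_prueferAngle {k' : ℝ → ℝ} {γ' : ℝ → Matrix (Fin 2) (Fin 2) ℝ}
    (h : IsHillFundSol k γ) (h' : IsHillFundSol k' γ') (hk' : Continuous k')
    (hle : ∀ t, k' t ≤ k t) (hT : 0 ≤ T) (φ : ℝ) :
    prueferAngle k' γ' φ T ≤ prueferAngle k γ φ T := by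
  obtain ⟨L, hL⟩ := isCompact_Icc.exists_bound_of_continuousOn
    ((hk.sub continuous_const).continuousOn (s := Set.Icc 0 T))
  exact pruefer_comparison (h.hasDerivAt_prueferAngle hk φ) (h'.hasDerivAt_prueferAngle hk' φ)
    (fun t _ => hle t) hL (by simp) hT

end IsHillFundSol

open IsHillFundSol in
theorem exists_neg_eigenvalue_of_le_of_le {k₁ k k₂ : ℝ → ℝ}
    {γ₁ γ γ₂ : ℝ → Matrix (Fin 2) (Fin 2) ℝ} {T : ℝ}
    (h₁ : IsHillFundSol k₁ γ₁) (h : IsHillFundSol k γ) (h₂ : IsHillFundSol k₂ γ₂)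
    (hk₁ : Continuous k₁) (hk : Continuous k) (hk₂ : Continuous k₂)
    (hk₁_le : ∀ t, k₁ t ≤ 1) (hkk₁ : ∀ t, k t ≤ k₁ t) (hk₂k : ∀ t, k₂ t ≤ k t)
    (hT₀ : 0 ≤ T) (hT : T ≤ 2 * π) (hdeg₁ : (γ₁ T + 1).det = 0) (hdeg₂ : (γ₂ T + 1).det = 0) :
    ∃ μ : ℝ, μ < 0 ∧ (γ T - μ • 1).det = 0 := by
  obtain ⟨φ₁, hφ₁⟩ := h₁.exists_prueferAngle_eq_add_pi hk₁ hk₁_le hT₀ hT hdeg₁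
  obtain ⟨φ₂, hφ₂⟩ := h₂.exists_prueferAngle_eq_add_pi hk₂
    (fun t => (hk₂k t).trans ((hkk₁ t).trans (hk₁_le t))) hT₀ hT hdeg₂
  have hle₁ := h₁.prueferAngle_le_prueferAngle hk₁ h hk hkk₁ hT₀ φ₁
  have hle₂ := h.prueferAngle_le_prueferAngle hk h₂ hk₂ hk₂k hT₀ φ₂
  obtain ⟨φ, -, hφ⟩ := intermediate_value_uIcc
    ((h.continuous_prueferAngle hk T).sub continuous_id).continuousOn
    (Set.mem_uIcc.2 (Or.inl ⟨by linarith, by linarith⟩) : π ∈ Set.uIcc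
      (prueferAngle k γ φ₁ T - φ₁) (prueferAngle k γ φ₂ T - φ₂))
  exact h.exists_neg_eigenvalue_of_prueferAngle_eq_add_pi hk (by simp at hφ; linarith)

lemma det_sub_smul_one_fin_two (M : Matrix (Fin 2) (Fin 2) ℝ) (c : ℝ) :
    (M - c • 1).det = c ^ 2 - M.trace * c + M.det := by
  simp [det_fin_two, trace_fin_two]
  ring

lemma trace_lt_neg_two_of_eigenvalue {M : Matrix (Fin 2) (Fin 2) ℝ} {μ : ℝ} (hdet : M.det = 1)
    (hμ : (M - μ • 1).det = 0) (hμ0 : μ < 0) (hμ1 : μ ≠ -1) : M.trace < -2 := by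
  rw [det_sub_smul_one_fin_two, hdet] at hμ
  have : 0 < (μ + 1) ^ 2 := by
    rw [sq_pos_iff]; exact fun h => hμ1 (eq_neg_of_add_eq_zero_left h)
  nlinarith

lemma exists_eigenvalue_lt_neg_one {M : Matrix (Fin 2) (Fin 2) ℝ} (hdet : M.det = 1)
    (htr : M.trace < -2) : ∃ μ : ℝ, μ < -1 ∧ (M - μ • 1).det = 0 := by
  have hdisc : 0 ≤ M.trace ^ 2 - 4 := by nlinarith
  refine ⟨(M.trace - √(M.trace ^ 2 - 4)) / 2, by linarith [sqrt_nonneg (M.trace ^ 2 - 4)], ?_⟩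
  rw [det_sub_smul_one_fin_two, hdet]
  nlinarith [sq_sqrt hdisc]

lemma not_bounded_norm_pow_of_eigenvalue {ι : Type*} [Fintype ι] [DecidableEq ι]
    {M : Matrix ι ι ℝ} {μ : ℝ} (hμ : 1 < |μ|) (h : (M - μ • 1).det = 0) :
    ¬∃ C : ℝ, ∀ n : ℕ, ‖M ^ n‖ ≤ C := by
  rintro ⟨C, hC⟩
  obtain ⟨v, hv, hMv⟩ := Matrix.exists_mulVec_eq_zero_iff.2 h
  rw [sub_mulVec, smul_mulVec, one_mulVec, sub_eq_zero] at hMv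
  have hpow : ∀ n : ℕ, M ^ n *ᵥ v = μ ^ n • v := by
    intro n
    induction n with
    | zero => simp
    | succ n ih => rw [pow_succ, ← mulVec_mulVec, hMv, mulVec_smul, ih, smul_smul, pow_succ']
  obtain ⟨i, hi⟩ := Function.ne_iff.1 hv
  have hbound : ∀ n : ℕ, |μ| ^ n * |v i| ≤ C * ∑ j, |v j| := fun n =>
    calc |μ| ^ n * |v i| = |∑ j, (M ^ n) i j * v j| := by
          rw [← abs_pow, ← abs_mul]; exact congrArg abs (congrFun (hpow n) i).symm
      _ ≤ ∑ j, |(M ^ n) i j| * |v j| := (Finset.abs_sum_le_sum_abs _ _).trans_eq (by simp [abs_mul])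
      _ ≤ ∑ j, C * |v j| := Finset.sum_le_sum fun j _ => mul_le_mul_of_nonneg_right
          ((norm_entry_le_entrywise_sup_norm (M ^ n)).trans (hC n)) (abs_nonneg _)
      _ = C * ∑ j, |v j| := Finset.mul_sum _ _ _ |>.symm
  obtain ⟨n, hn⟩ := pow_unbounded_of_one_lt ((C * ∑ j, |v j|) / |v i|) hμ
  rw [div_lt_iff₀ (abs_pos.2 hi)] at hn
  exact (hbound n).not_gt hn

def hillCoeff (β e t : ℝ) : ℝ := 1 - β / (1 + e * cos t)

section hillCoeff

variable {β e : ℝ}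

lemma one_add_mul_cos_pos (he : |e| < 1) (t : ℝ) : 0 < 1 + e * cos t := by
  have : |e * cos t| < 1 := by
    rw [abs_mul]; exact (mul_le_of_le_one_right (abs_nonneg e) (abs_cos_le_one t)).trans_lt he
  linarith [neg_abs_le (e * cos t)]

lemma continuous_hillCoeff (he : |e| < 1) : Continuous (hillCoeff β e) :=
  continuous_const.sub (continuous_const.div (by fun_prop) fun t => (one_add_mul_cos_pos he t).ne')

lemma hillCoeff_le_one (hβ : 0 ≤ β) (he : |e| < 1) (t : ℝ) : hillCoeff β e t ≤ 1 :=
  sub_le_self _ (div_nonneg hβ (one_add_mul_cos_pos he t).le)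

lemma hillCoeff_anti {β' : ℝ} (hβ : β ≤ β') (he : |e| < 1) (t : ℝ) :
    hillCoeff β' e t ≤ hillCoeff β e t :=
  sub_le_sub_left (div_le_div_of_nonneg_right hβ (one_add_mul_cos_pos he t).le) _

lemma Jmat_mul_Bmat (t : ℝ) : Jmat * Bmat β e t = hillMatrix (hillCoeff β e t) := by
  simp [Jmat, Bmat, hillMatrix, hillCoeff]

lemma IsFundSol.isHillFundSol {γ : ℝ → Matrix (Fin 2) (Fin 2) ℝ} (h : IsFundSol β e γ) :
    IsHillFundSol (hillCoeff β e) γ :=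
  ⟨h.1, fun t => by simpa only [Jmat_mul_Bmat] using h.2 t⟩

end hillCoeff

theorem stmt_14_general (e : ℝ) (he : e ∈ Set.Ico (0 : ℝ) 1)
    (β₁ β₂ : ℝ) (hβ₁ : β₁ ∈ Set.Ioo (0 : ℝ) 1) (hβ₂ : β₂ ∈ Set.Ioo (0 : ℝ) 1)
    (γ : ℝ → ℝ → Matrix (Fin 2) (Fin 2) ℝ)
    (hγ : ∀ β ∈ Set.Icc (0 : ℝ) 1, IsFundSol β e (γ β))
    (hdeg : ∀ β ∈ Set.Icc (0 : ℝ) 1,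
      (Matrix.det (γ β (2 * π) + 1) = 0 ↔ β = β₁ ∨ β = β₂)) :
    ∀ β : ℝ, β₁ < β → β < β₂ →
      (∃ μ : ℝ, μ < -1 ∧ Matrix.det (γ β (2 * π) - μ • 1) = 0) ∧
      Matrix.trace (γ β (2 * π)) < -2 ∧
      ¬∃ C : ℝ, ∀ n : ℕ, ‖γ β (2 * π) ^ n‖ ≤ C := by
  intro β hβ₁β hββ₂
  have he' : |e| < 1 := abs_lt.2 ⟨by linarith [he.1], he.2⟩
  have hβ : β ∈ Set.Icc (0 : ℝ) 1 := ⟨hβ₁.1.le.trans hβ₁β.le, hββ₂.le.trans hβ₂.2.le⟩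
  have hβ₁' : β₁ ∈ Set.Icc (0 : ℝ) 1 := Set.Ioo_subset_Icc_self hβ₁
  have hβ₂' : β₂ ∈ Set.Icc (0 : ℝ) 1 := Set.Ioo_subset_Icc_self hβ₂
  obtain ⟨μ, hμ0, hμ⟩ := exists_neg_eigenvalue_of_le_of_le
    (hγ β₁ hβ₁').isHillFundSol (hγ β hβ).isHillFundSol (hγ β₂ hβ₂').isHillFundSol
    (continuous_hillCoeff he') (continuous_hillCoeff he') (continuous_hillCoeff he')
    (hillCoeff_le_one hβ₁.1.le he') (hillCoeff_anti hβ₁β.le he') (hillCoeff_anti hββ₂.le he')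
    (by positivity) le_rfl ((hdeg β₁ hβ₁').2 (Or.inl rfl)) ((hdeg β₂ hβ₂').2 (Or.inr rfl))
  have hμ1 : μ ≠ -1 := by
    rintro rfl
    rw [neg_smul, one_smul, sub_neg_eq_add] at hμ
    rcases (hdeg β hβ).1 hμ with rfl | rfl
    exacts [lt_irrefl _ hβ₁β, lt_irrefl _ hββ₂]
  have hdet := (hγ β hβ).isHillFundSol.det_eq_one (2 * π)
  have htr := trace_lt_neg_two_of_eigenvalue hdet hμ hμ0 hμ1
  obtain ⟨μ', hμ', hdet'⟩ := exists_eigenvalue_lt_neg_one hdet htr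
  exact ⟨⟨μ', hμ', hdet'⟩, htr, not_bounded_norm_pow_of_eigenvalue
    (by rw [abs_of_neg (by linarith)]; linarith) hdet'⟩

/-- in Region II (between the two `-1`-degenerate values `β₁ < β₂`),
the monodromy matrix has a real eigenvalue `μ < -1`, its trace is `< -2`,
and it is linearly unstable. -/
theorem stmt_14 (e : ℝ) (he : e ∈ Set.Ico (0 : ℝ) 1)
    (β₁ β₂ : ℝ) (hβ₁ : β₁ ∈ Set.Ioo (0 : ℝ) 1) (hβ₂ : β₂ ∈ Set.Ioo (0 : ℝ) 1)
    (hlt : β₁ < β₂)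
    (γ : ℝ → ℝ → Matrix (Fin 2) (Fin 2) ℝ)
    (hγ : ∀ β ∈ Set.Icc (0 : ℝ) 1, IsFundSol β e (γ β))
    (hdeg : ∀ β ∈ Set.Icc (0 : ℝ) 1,
      (Matrix.det (γ β (2 * π) + 1) = 0 ↔ β = β₁ ∨ β = β₂)) :
    ∀ β : ℝ, β₁ < β → β < β₂ →
      (∃ μ : ℝ, μ < -1 ∧ Matrix.det (γ β (2 * π) - μ • 1) = 0) ∧
      Matrix.trace (γ β (2 * π)) < -2 ∧
      ¬∃ C : ℝ, ∀ n : ℕ, ‖γ β (2 * π) ^ n‖ ≤ C :=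
  stmt_14_general e he β₁ β₂ hβ₁ hβ₂ γ hγ hdeg
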